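/- arXiv:1301.6013 — 5 statements merged into one kernel-verified Lean document; each statement's English description precedes it below -/
import Mathlib

section
/- Let π : X → W be a surjection between proper metric spaces that is locally David–Semmes s-regular. Then for every compact set K ⊆ X and every point a ∈ W, the s-dimensional Hausdorff measure of π⁻¹(a) ∩ K is bounded above by a constant depending only on K. In particular, every leaf π⁻¹(a) has Hausdorff dimension at most s. -/
/-!
A fibre `π⁻¹(a) ∩ K` lies in `π⁻¹(B(a, r)) ∩ K`, so it is covered by at most `C r^{-s}` balls of
diameter at most `2Cr`. Their `s`-dimensional Hausdorff sum is at most `C (2C)^s`, uniformly in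
`a` and `r`, and letting `r → 0` bounds `μH[s]` of the fibre. The dimension bound follows because
a proper space is σ-compact, so each leaf is a countable union of sets of finite `μH[s]`.
-/

open MeasureTheory Metric
open scoped ENNReal NNReal

/-- A surjection `π : X → W` between metric spaces is locally David–Semmes `s`-regular:
for every compact `K ⊆ X`, `π` is Lipschitz on `K` and there are `C ≥ 1`, `r₀ > 0` such
that for every ball of radius `r < r₀` in `W`, the truncated preimage `π⁻¹(B) ∩ K` can be
covered by at most `C·r^{-s}` balls of radius `C·r` in `X`. -/
def LocallyDSRegular {X W : Type*} [MetricSpace X] [MetricSpace W]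
    (π : X → W) (s : ℝ) : Prop :=
  ∀ K : Set X, IsCompact K →
    (∃ L : NNReal, LipschitzOnWith L π K) ∧
    ∃ C : ℝ, 1 ≤ C ∧ ∃ r₀ : ℝ, 0 < r₀ ∧ ∀ (w : W) (r : ℝ), 0 < r → r < r₀ →
      ∃ T : Finset X, (T.card : ℝ) ≤ C * r ^ (-s) ∧
        π ⁻¹' (ball w r) ∩ K ⊆ ⋃ x ∈ T, ball x (C * r)

open Filter Set
open scoped Topology

section HausdorffMeasureBounds

variable {X : Type*} [MetricSpace X]

theorem ediam_ball_le_ofReal (x : X) (r : ℝ) : ediam (ball x r) ≤ ENNReal.ofReal (2 * r) :=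
  ediam_le_of_forall_dist_le fun y hy z hz =>
    (dist_triangle_right y z x).trans (by linarith [mem_ball.1 hy, mem_ball.1 hz])

variable [MeasurableSpace X] [BorelSpace X]

theorem hausdorffMeasure_le_of_frequently_ball_cover {s : ℝ} (hs : 0 ≤ s) {A : Set X}
    {M : ℝ≥0∞} (hcov : ∀ ε > 0, ∃ r ∈ Ioc 0 ε, ∃ T : Finset X,
      A ⊆ ⋃ x ∈ T, ball x r ∧ T.card * ENNReal.ofReal (2 * r) ^ s ≤ M) :
    μH[s] A ≤ M := by
  choose r hr T hTA hTM using fun n : ℕ => hcov (1 / (n + 1)) Nat.one_div_pos_of_nat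
  have hr_lim : Tendsto r atTop (𝓝 0) :=
    tendsto_of_tendsto_of_tendsto_of_le_of_le tendsto_const_nhds
      tendsto_one_div_add_atTop_nhds_zero_nat (fun n => (hr n).1.le) (fun n => (hr n).2)
  have hdiam_lim : Tendsto (fun n => ENNReal.ofReal (2 * r n)) atTop (𝓝 0) := by
    simpa using ENNReal.tendsto_ofReal (hr_lim.const_mul 2)
  have hsum_le : ∀ n, ∑ i : T n, ediam (ball (i : X) (r n)) ^ s ≤ M := fun n =>
    calc ∑ i : T n, ediam (ball (i : X) (r n)) ^ s
        ≤ ∑ _i : T n, ENNReal.ofReal (2 * r n) ^ s := by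
          gcongr with i; exact ediam_ball_le_ofReal _ _
      _ = (T n).card * ENNReal.ofReal (2 * r n) ^ s := by simp
      _ ≤ M := hTM n
  calc μH[s] A ≤ liminf (fun n => ∑ i : T n, ediam (ball (i : X) (r n)) ^ s) atTop :=
        Measure.hausdorffMeasure_le_liminf_sum (ι := fun n => T n) s A _ hdiam_lim
          (fun n i => ball (i : X) (r n))
          (Eventually.of_forall fun n i => ediam_ball_le_ofReal _ _)
          (Eventually.of_forall fun n => by simpa only [iUnion_subtype] using hTA n)
    _ ≤ M := liminf_le_of_frequently_le' (Frequently.of_forall hsum_le)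

theorem hausdorffMeasure_le_of_ball_cover_card_le {s : ℝ} (hs : 0 ≤ s) {A : Set X}
    {C r₀ : ℝ} (hC : 0 < C) (hr₀ : 0 < r₀) (hcov : ∀ r, 0 < r → r < r₀ → ∃ T : Finset X,
      (T.card : ℝ) ≤ C * r ^ (-s) ∧ A ⊆ ⋃ x ∈ T, ball x (C * r)) :
    μH[s] A ≤ ENNReal.ofReal (C * (2 * C) ^ s) := by
  refine hausdorffMeasure_le_of_frequently_ball_cover hs fun ε hε => ?_
  set r := min (r₀ / 2) (ε / C)
  have hr : 0 < r := by positivity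
  obtain ⟨T, hTcard, hTA⟩ := hcov r hr ((min_le_left _ _).trans_lt (half_lt_self hr₀))
  refine ⟨C * r, ⟨by positivity, ?_⟩, T, hTA, ?_⟩
  · calc C * r ≤ C * (ε / C) := by gcongr; exact min_le_right _ _
      _ = ε := mul_div_cancel₀ ε hC.ne'
  calc (T.card : ℝ≥0∞) * ENNReal.ofReal (2 * (C * r)) ^ s
      = ENNReal.ofReal (T.card * (2 * (C * r)) ^ s) := by
        rw [ENNReal.ofReal_rpow_of_nonneg (by positivity) hs, ENNReal.ofReal_mul (by positivity),
          ENNReal.ofReal_natCast]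
    _ ≤ ENNReal.ofReal (C * r ^ (-s) * (2 * (C * r)) ^ s) := by gcongr
    _ = ENNReal.ofReal (C * (2 * C) ^ s) := by
        rw [← mul_assoc, Real.mul_rpow (by positivity) hr.le, Real.rpow_neg hr.le]
        field_simp

theorem dimH_le_of_forall_isCompact_hausdorffMeasure_inter_ne_top [SigmaCompactSpace X]
    {A : Set X} {d : ℝ≥0} (h : ∀ K, IsCompact K → μH[d] (A ∩ K) ≠ ∞) : dimH A ≤ d := by
  rw [← inter_univ A, ← iUnion_compactCovering X, inter_iUnion, dimH_iUnion]
  exact iSup_le fun n => dimH_le_of_hausdorffMeasure_ne_top (h _ (isCompact_compactCovering X n))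

end HausdorffMeasureBounds

theorem LocallyDSRegular.exists_hausdorffMeasure_fiber_inter_le {X W : Type*} [MetricSpace X]
    [MetricSpace W] [MeasurableSpace X] [BorelSpace X] {π : X → W} {s : ℝ} (hs : 0 ≤ s)
    (hreg : LocallyDSRegular π s) {K : Set X} (hK : IsCompact K) :
    ∃ C : ℝ≥0∞, C < ⊤ ∧ ∀ a : W, μH[s] (π ⁻¹' {a} ∩ K) ≤ C := by
  obtain ⟨-, C, hC, r₀, hr₀, hcov⟩ := hreg K hK
  refine ⟨ENNReal.ofReal (C * (2 * C) ^ s), ENNReal.ofReal_lt_top, fun a => ?_⟩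
  refine hausdorffMeasure_le_of_ball_cover_card_le hs (by linarith) hr₀ fun r hr hrr₀ => ?_
  obtain ⟨T, hTcard, hTcov⟩ := hcov a r hr hrr₀
  have hfiber : π ⁻¹' {a} ⊆ π ⁻¹' ball a r :=
    preimage_mono (singleton_subset_iff.2 (mem_ball_self hr))
  exact ⟨T, hTcard, (inter_subset_inter_left K hfiber).trans hTcov⟩

theorem hausdorff_measure_of_leaf_bounded_general
    {X W : Type*} [MetricSpace X] [MetricSpace W]
    [ProperSpace X] [MeasurableSpace X] [BorelSpace X]
    (π : X → W) (s : ℝ) (hs : 0 ≤ s)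
    (hreg : LocallyDSRegular π s) :
    (∀ K : Set X, IsCompact K → ∃ C : ℝ≥0∞, C < ⊤ ∧
      ∀ a : W, μH[s] (π ⁻¹' {a} ∩ K) ≤ C) ∧
    ∀ a : W, dimH (π ⁻¹' {a}) ≤ ENNReal.ofReal s := by
  refine ⟨fun K hK => hreg.exists_hausdorffMeasure_fiber_inter_le hs hK, fun a => ?_⟩
  refine dimH_le_of_forall_isCompact_hausdorffMeasure_inter_ne_top fun K hK => ?_
  obtain ⟨C, hC, hle⟩ := hreg.exists_hausdorffMeasure_fiber_inter_le hs hK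
  rw [Real.coe_toNNReal s hs]
  exact ne_top_of_le_ne_top hC.ne (hle a)

theorem hausdorff_measure_of_leaf_bounded
    {X W : Type*} [MetricSpace X] [MetricSpace W]
    [ProperSpace X] [ProperSpace W] [MeasurableSpace X] [BorelSpace X]
    (π : X → W) (hsurj : Function.Surjective π) (s : ℝ) (hs : 0 ≤ s)
    (hreg : LocallyDSRegular π s) :
    (∀ K : Set X, IsCompact K → ∃ C : ℝ≥0∞, C < ⊤ ∧
      ∀ a : W, μH[s] (π ⁻¹' {a} ∩ K) ≤ C) ∧
    ∀ a : W, dimH (π ⁻¹' {a}) ≤ ENNReal.ofReal s :=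
  hausdorff_measure_of_leaf_bounded_general π s hs hreg
end

section
/- Let (X,d) be a metric space, t ≥ 0, and let E ⊆ X be a bounded set with r^t/K ≤ ℋ^t(B(x,r) ∩ E) ≤ K·r^t for all x ∈ E and r ≤ 2·diam E, for some K ≥ 1. Fix σ ≥ 1 and ε > 0, and let {x₁,…,x_N} be a maximal ε-separated subset of E. If I ⊆ {1,…,N} is any index set such that the balls {B(x_k, σε) : k ∈ I} have a common point, then the cardinality of I is at most K²·(6σ)^t. -/
open MeasureTheory Metric
open scoped ENNReal NNReal

/-- Bounded overlap for dilated balls around a maximal `ε`-separated set in an Ahlfors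
`t`-regular set: if the balls `B(x, σε)`, `x ∈ I ⊆ S`, have a common point, then
`card I ≤ K² (6σ)^t`. -/
theorem maximal_separated_overlap_bound
    {X : Type*} [MetricSpace X] [MeasurableSpace X] [BorelSpace X]
    (E : Set X) (hE : Bornology.IsBounded E) (t : ℝ) (ht : 0 ≤ t)
    (K : ℝ) (hK : 1 ≤ K)
    (hreg : ∀ x ∈ E, ∀ r : ℝ, 0 < r → r ≤ 2 * diam E →
      ENNReal.ofReal (r ^ t / K) ≤ μH[t] (ball x r ∩ E) ∧
      μH[t] (ball x r ∩ E) ≤ ENNReal.ofReal (K * r ^ t))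
    (σ : ℝ) (hσ : 1 ≤ σ) (ε : ℝ) (hε : 0 < ε)
    (S : Set X) (hSE : S ⊆ E)
    (hsep : ∀ x ∈ S, ∀ y ∈ S, x ≠ y → ε ≤ dist x y)
    (hmax : ∀ y ∈ E, ∃ x ∈ S, dist y x < ε)
    (I : Set X) (hIS : I ⊆ S)
    (hcommon : ∃ z : X, ∀ x ∈ I, z ∈ ball x (σ * ε)) :
    I.encard ≤ ENNReal.ofReal (K ^ 2 * (6 * σ) ^ t) := by
  classical
  set M : ℝ := K ^ 2 * (6 * σ) ^ t with hMdef
  by_contra hcon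
  push_neg at hcon
  have hK0 : (0:ℝ) < K := lt_of_lt_of_le one_pos hK
  have hσ0 : (0:ℝ) < σ := lt_of_lt_of_le one_pos hσ
  have hσε : 0 < σ * ε := mul_pos hσ0 hε
  have h6σ : (1:ℝ) ≤ 6 * σ := by nlinarith
  have hM1 : (1:ℝ) ≤ M := by
    have h1 : (1:ℝ) ≤ (6*σ)^t := Real.one_le_rpow h6σ ht
    nlinarith
  have hM0 : (0:ℝ) ≤ M := le_trans zero_le_one hM1
  set n : ℕ := ⌊M⌋₊ + 1 with hndef
  have hMn : M < n := by exact_mod_cast Nat.lt_floor_add_one M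
  have h2n : 2 ≤ n := by
    have : 1 ≤ ⌊M⌋₊ := Nat.le_floor (by exact_mod_cast hM1)
    omega
  have hnI : (n : ℕ∞) ≤ I.encard := by
    rcases eq_or_ne I.encard ⊤ with h | h
    · simp [h]
    · obtain ⟨m, hm⟩ := WithTop.ne_top_iff_exists.1 h
      rw [← hm] at hcon ⊢
      have h2 : ENNReal.ofReal M < (m : ℝ≥0∞) := by exact_mod_cast hcon
      have hm0 : m ≠ 0 := by
        rintro rfl
        simp at h2
      have h3 : M < (m : ℝ) := (ENNReal.ofReal_lt_natCast hm0).1 h2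
      have h4 : ⌊M⌋₊ < m := (Nat.floor_lt hM0).2 h3
      have h5 : n ≤ m := by omega
      have h6 : (WithTop.some m : ℕ∞) = (m : ℕ∞) := rfl
      show (n : ℕ∞) ≤ WithTop.some m
      rw [h6]
      exact_mod_cast h5
  obtain ⟨J, hJI, hJcard⟩ := Set.exists_subset_encard_eq hnI
  have hJfin : J.Finite := Set.finite_of_encard_eq_coe hJcard
  have hJS : J ⊆ S := fun x hx => hIS (hJI hx)
  have hJE : J ⊆ E := fun x hx => hSE (hJS hx)
  -- J is nontrivial, hence diam E ≥ ε
  have hJ1 : 1 < J.encard := by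
    rw [hJcard]
    exact_mod_cast h2n
  obtain ⟨a, b, ha, hb, hab⟩ := Set.one_lt_encard_iff.1 hJ1
  have hεdiam : ε ≤ diam E :=
    le_trans (hsep a (hJS ha) b (hJS hb) hab) (dist_le_diam_of_mem hE (hJE ha) (hJE hb))
  have hdiam0 : 0 < diam E := lt_of_lt_of_le hε hεdiam
  obtain ⟨z, hz⟩ := hcommon
  obtain ⟨x₀, hx₀⟩ : J.Nonempty := ⟨a, ha⟩
  set r : ℝ := min (3 * (σ * ε)) (2 * diam E) with hrdef
  have hr0 : 0 < r := lt_min (by linarith) (by linarith)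
  have hr2d : r ≤ 2 * diam E := min_le_right _ _
  have hr3σε : r ≤ 3 * (σ * ε) := min_le_left _ _
  -- inclusion of small balls
  have hincl : ∀ x ∈ J, ball x (ε/2) ∩ E ⊆ ball x₀ r ∩ E := by
    intro x hx p hp
    obtain ⟨hp1, hp2⟩ := hp
    refine ⟨?_, hp2⟩
    have hd1 : dist p x < ε/2 := mem_ball.1 hp1
    have hd2 : dist z x < σ * ε := mem_ball.1 (hz x (hJI hx))
    have hd3 : dist z x₀ < σ * ε := mem_ball.1 (hz x₀ (hJI hx₀))
    have hA : dist p x₀ < 3 * (σ * ε) := by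
      have := dist_triangle p x x₀
      have := dist_triangle x z x₀
      have hεσ : ε / 2 ≤ σ * ε := by nlinarith
      calc dist p x₀ ≤ dist p x + dist x x₀ := dist_triangle _ _ _
        _ ≤ dist p x + (dist x z + dist z x₀) := by linarith [dist_triangle x z x₀]
        _ < ε/2 + (σ * ε + σ * ε) := by
            rw [dist_comm x z]; linarith
        _ ≤ 3 * (σ * ε) := by linarith
    have hB : dist p x₀ < 2 * diam E := by
      have := dist_le_diam_of_mem hE hp2 (hJE hx₀)
      linarith
    exact mem_ball.2 (lt_min hA hB)
  -- disjointness of small balls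
  have hdisj : (hJfin.toFinset : Set X).PairwiseDisjoint (fun x => ball x (ε/2)) := by
    intro x hx y hy hxy
    simp only [Set.Finite.coe_toFinset] at hx hy
    refine Set.disjoint_left.2 fun p hpx hpy => ?_
    have h1 : dist p x < ε/2 := mem_ball.1 hpx
    have h2 : dist p y < ε/2 := mem_ball.1 hpy
    have h3 : ε ≤ dist x y := hsep x (hJS hx) y (hJS hy) hxy
    have := dist_triangle x p y
    rw [dist_comm x p] at this
    linarith
  -- measure computation
  set μ := (μH[t] : Measure X)
  set ν := μ.restrict E with hνdef
  have hkey : ∑ x ∈ hJfin.toFinset, μ (ball x (ε/2) ∩ E) ≤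
      ENNReal.ofReal (K * (3 * (σ * ε)) ^ t) := by
    have hmeas : ∀ x ∈ hJfin.toFinset, MeasurableSet (ball x (ε/2)) :=
      fun x _ => measurableSet_ball
    have hsum : ∑ x ∈ hJfin.toFinset, ν (ball x (ε/2)) =
        ν (⋃ x ∈ hJfin.toFinset, ball x (ε/2)) :=
      (measure_biUnion_finset hdisj hmeas).symm
    have hνball : ∀ x : X, ν (ball x (ε/2)) = μ (ball x (ε/2) ∩ E) :=
      fun x => Measure.restrict_apply measurableSet_ball
    calc ∑ x ∈ hJfin.toFinset, μ (ball x (ε/2) ∩ E)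
        = ∑ x ∈ hJfin.toFinset, ν (ball x (ε/2)) := by
          simp_rw [hνball]
      _ = ν (⋃ x ∈ hJfin.toFinset, ball x (ε/2)) := hsum
      _ = μ ((⋃ x ∈ hJfin.toFinset, ball x (ε/2)) ∩ E) :=
          Measure.restrict_apply (by
            exact MeasurableSet.biUnion hJfin.toFinset.countable_toSet
              fun x _ => measurableSet_ball)
      _ ≤ μ (ball x₀ r ∩ E) := by
          apply measure_mono
          rintro p ⟨hp1, hp2⟩
          simp only [Set.mem_iUnion] at hp1
          obtain ⟨x, hx, hpx⟩ := hp1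
          rw [Set.Finite.mem_toFinset] at hx
          exact hincl x hx ⟨hpx, hp2⟩
      _ ≤ ENNReal.ofReal (K * r ^ t) :=
          (hreg x₀ (hJE hx₀) r hr0 hr2d).2
      _ ≤ ENNReal.ofReal (K * (3 * (σ * ε)) ^ t) := by
          apply ENNReal.ofReal_le_ofReal
          have : r ^ t ≤ (3 * (σ * ε)) ^ t :=
            Real.rpow_le_rpow (le_of_lt hr0) hr3σε ht
          nlinarith
  -- lower bound for each term
  have hlow : ∀ x ∈ hJfin.toFinset,
      ENNReal.ofReal ((ε/2) ^ t / K) ≤ μ (ball x (ε/2) ∩ E) := by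
    intro x hx
    rw [Set.Finite.mem_toFinset] at hx
    exact (hreg x (hJE hx) (ε/2) (by linarith) (by linarith)).1
  have hcard : hJfin.toFinset.card = n := by
    have := hJfin.encard_eq_coe_toFinset_card
    rw [hJcard] at this
    exact_mod_cast this.symm
  have hsumlow : (n : ℝ≥0∞) * ENNReal.ofReal ((ε/2) ^ t / K) ≤
      ∑ x ∈ hJfin.toFinset, μ (ball x (ε/2) ∩ E) := by
    have := Finset.card_nsmul_le_sum hJfin.toFinset
      (fun x => μ (ball x (ε/2) ∩ E)) (ENNReal.ofReal ((ε/2) ^ t / K)) hlow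
    rwa [hcard, nsmul_eq_mul] at this
  have hmain : (n : ℝ≥0∞) * ENNReal.ofReal ((ε/2) ^ t / K) ≤
      ENNReal.ofReal (K * (3 * (σ * ε)) ^ t) := le_trans hsumlow hkey
  -- convert to reals
  have hc0 : (0:ℝ) < (ε/2) ^ t / K :=
    div_pos (Real.rpow_pos_of_pos (by linarith) t) hK0
  have hreal : (n : ℝ) * ((ε/2) ^ t / K) ≤ K * (3 * (σ * ε)) ^ t := by
    rw [← ENNReal.ofReal_natCast n, ← ENNReal.ofReal_mul (by positivity)] at hmain
    exact (ENNReal.ofReal_le_ofReal_iff (by positivity)).1 hmain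
  have hid : M * ((ε/2) ^ t / K) = K * (3 * (σ * ε)) ^ t := by
    have h1 : ((6*σ):ℝ)^t = (3*(σ*ε))^t / ((ε/2))^t := by
      rw [← Real.div_rpow (by positivity) (by positivity)]
      congr 1
      field_simp
      ring
    have hp : (0:ℝ) < (ε/2)^t := Real.rpow_pos_of_pos (by linarith) t
    rw [hMdef, h1]
    field_simp
  have : (n : ℝ) ≤ M := by
    rw [← hid] at hreal
    exact le_of_mul_le_mul_right hreal hc0
  linarith
end

section
/- Let X, W be proper metric spaces, π : X → W continuous, Y a metric space, f : X → Y continuous, K ⊆ X compact, and α > 0. Then the set E_α = {a ∈ W : ℋ^α(f(π⁻¹(a) ∩ K)) > 0} is a countable union of compact subsets of W. More precisely, for each n ∈ ℕ, the set E_α(n) = {a ∈ W : ℋ^α_∞(f(π⁻¹(a) ∩ K)) ≥ 1/n} is closed, and E_α = ⋃_n E_α(n). -/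
/-!
The map `a ↦ f '' (π ⁻¹' {a} ∩ K)` is upper semicontinuous: the set of `a` whose image fibre lies
in a given open set is open, its complement being the continuous image of a compact set. Since
Hausdorff content may be computed with countable open covers (thicken each set of a cover
slightly), the sublevel sets `{a | ℋ^α_∞ < c}` are open, so the superlevel sets `E_α(n)` are
closed; they lie in the compact set `π '' K`, hence are compact. Finally `ℋ^α` and `ℋ^α_∞` have
the same null sets, which gives `E_α = ⋃ₙ E_α(n)`.
-/

open MeasureTheory Metric
open scoped ENNReal NNReal

/-- The `α`-dimensional Hausdorff content of a set in a metric space. -/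
noncomputable def hausdorffContent {Y : Type*} [EMetricSpace Y] (α : ℝ) (S : Set Y) : ℝ≥0∞ :=
  ⨅ (t : ℕ → Set Y) (_ : S ⊆ ⋃ n, t n), ∑' n, EMetric.diam (t n) ^ α

open Filter Set
open scoped Topology

section HausdorffContent

variable {Y : Type*} [EMetricSpace Y] {α : ℝ} {S : Set Y}

lemma hausdorffContent_eq_iInf :
    hausdorffContent α S = ⨅ (t : ℕ → Set Y) (_ : S ⊆ ⋃ n, t n), ∑' n, ediam (t n) ^ α :=
  rfl

lemma hausdorffContent_le_tsum (t : ℕ → Set Y) (ht : S ⊆ ⋃ n, t n) :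
    hausdorffContent α S ≤ ∑' n, ediam (t n) ^ α :=
  hausdorffContent_eq_iInf (S := S) ▸ iInf₂_le t ht

lemma exists_cover_tsum_lt_of_hausdorffContent_lt {c : ℝ≥0∞} (h : hausdorffContent α S < c) :
    ∃ t : ℕ → Set Y, S ⊆ ⋃ n, t n ∧ ∑' n, ediam (t n) ^ α < c := by
  simpa only [hausdorffContent_eq_iInf, iInf_lt_iff, exists_prop] using h

lemma hausdorffContent_le_hausdorffMeasure [MeasurableSpace Y] [BorelSpace Y] (hα : 0 < α)
    (S : Set Y) : hausdorffContent α S ≤ μH[α] S := by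
  rw [Measure.hausdorffMeasure_apply]
  refine le_trans ?_ (le_iSup₂_of_le 1 one_pos le_rfl)
  refine le_iInf₂ fun t ht => le_iInf fun _ => ?_
  refine (hausdorffContent_le_tsum t ht).trans (ENNReal.tsum_le_tsum fun n => ?_)
  rcases (t n).eq_empty_or_nonempty with h | h
  · simp [h, ENNReal.zero_rpow_of_pos hα]
  · exact le_iSup_of_le h le_rfl

/-- Covers of total `α`-weight below `r ^ α` consist of sets of diameter below `r`, so covers of
vanishing weight are admissible at every scale in the definition of `μH[α]`. -/
lemma hausdorffMeasure_eq_zero_of_hausdorffContent_eq_zero [MeasurableSpace Y] [BorelSpace Y]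
    (hα : 0 < α) (h : hausdorffContent α S = 0) : μH[α] S = 0 := by
  set r : ℕ → ℝ≥0∞ := fun k => (k : ℝ≥0∞)⁻¹
  have hr : Tendsto r atTop (𝓝 0) := ENNReal.tendsto_inv_nat_nhds_zero
  have hrα : Tendsto (fun k => r k ^ α) atTop (𝓝 0) := by
    have := ((ENNReal.continuous_rpow_const (y := α)).tendsto 0).comp hr
    rwa [ENNReal.zero_rpow_of_pos hα] at this
  have hcover : ∀ k, ∃ t : ℕ → Set Y, S ⊆ ⋃ n, t n ∧ ∑' n, ediam (t n) ^ α < r k ^ α :=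
    fun k => exists_cover_tsum_lt_of_hausdorffContent_lt <| h ▸
      ENNReal.rpow_pos_of_nonneg (ENNReal.inv_pos.2 (ENNReal.natCast_ne_top k)) hα.le
  choose t hSt hsum using hcover
  have hdiam : ∀ k n, ediam (t k n) ≤ r k := fun k n =>
    ((ENNReal.rpow_lt_rpow_iff hα).1 ((ENNReal.le_tsum n).trans_lt (hsum k))).le
  refine nonpos_iff_eq_zero.1 ?_
  calc μH[α] S ≤ liminf (fun k => ∑' n, ediam (t k n) ^ α) atTop :=
        Measure.hausdorffMeasure_le_liminf_tsum α S r hr t (.of_forall hdiam) (.of_forall hSt)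
    _ ≤ liminf (fun k => r k ^ α) atTop :=
        liminf_le_liminf (.of_forall fun k => (hsum k).le)
    _ = 0 := hrα.liminf_eq

lemma hausdorffContent_pos_iff [MeasurableSpace Y] [BorelSpace Y] (hα : 0 < α) :
    0 < hausdorffContent α S ↔ 0 < μH[α] S := by
  simp only [pos_iff_ne_zero]
  exact ⟨fun h h0 => h (nonpos_iff_eq_zero.1 (h0 ▸ hausdorffContent_le_hausdorffMeasure hα S)),
    mt (hausdorffMeasure_eq_zero_of_hausdorffContent_eq_zero hα)⟩

lemma Set.Nonempty.of_hausdorffContent_pos [MeasurableSpace Y] [BorelSpace Y] (hα : 0 < α)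
    (h : 0 < hausdorffContent α S) : S.Nonempty := by
  rw [hausdorffContent_pos_iff hα] at h
  exact nonempty_iff_ne_empty.2 fun hS => h.ne' (hS ▸ measure_empty)

lemma exists_pos_rpow_ediam_thickening_lt (hα : 0 < α) (hS : ediam S ≠ ∞) {ε : ℝ≥0∞}
    (hε : 0 < ε) : ∃ δ : ℝ≥0, 0 < δ ∧ ediam (thickening δ S) ^ α < ediam S ^ α + ε := by
  have hlim : Tendsto (fun δ : ℝ≥0 => (ediam S + 2 * (δ : ℝ≥0∞)) ^ α) (𝓝[>] 0)
      (𝓝 (ediam S ^ α)) := by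
    have hcont : Continuous fun δ : ℝ≥0 => (ediam S + 2 * (δ : ℝ≥0∞)) ^ α :=
      ENNReal.continuous_rpow_const.comp <| continuous_const.add <|
        (ENNReal.continuous_const_mul (by norm_num)).comp ENNReal.continuous_coe
    simpa [ContinuousWithinAt] using hcont.continuousWithinAt (s := Ioi 0) (x := 0)
  have hlt : ediam S ^ α < ediam S ^ α + ε :=
    ENNReal.lt_add_right (ENNReal.rpow_ne_top_of_nonneg hα.le hS) hε.ne'
  obtain ⟨δ, hδ, hδpos⟩ := ((hlim.eventually_lt_const hlt).and self_mem_nhdsWithin).exists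
  exact ⟨δ, hδpos, (ENNReal.rpow_le_rpow (ediam_thickening_le δ) hα.le).trans_lt hδ⟩

lemma exists_isOpen_cover_tsum_lt_of_hausdorffContent_lt (hα : 0 < α) {c : ℝ≥0∞}
    (h : hausdorffContent α S < c) :
    ∃ U : ℕ → Set Y, (∀ n, IsOpen (U n)) ∧ S ⊆ ⋃ n, U n ∧ ∑' n, ediam (U n) ^ α < c := by
  obtain ⟨t, hSt, hsum⟩ := exists_cover_tsum_lt_of_hausdorffContent_lt h
  obtain ⟨ε, hε, hεc⟩ := ENNReal.lt_iff_exists_add_pos_lt.1 hsum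
  obtain ⟨ε', hε', hε'sum⟩ :=
    ENNReal.exists_pos_sum_of_countable' (ENNReal.coe_ne_zero.2 hε.ne') ℕ
  have hsum_ne_top : ∑' n, ediam (t n) ^ α ≠ ∞ := (hsum.trans_le le_top).ne
  have hdiam_ne_top : ∀ n, ediam (t n) ≠ ∞ := fun n hn =>
    hsum_ne_top <| top_unique <| ENNReal.top_rpow_of_pos hα ▸ hn ▸ ENNReal.le_tsum n
  choose δ hδ hδt using fun n => exists_pos_rpow_ediam_thickening_lt hα (hdiam_ne_top n) (hε' n)
  refine ⟨fun n => thickening (δ n) (t n), fun n => isOpen_thickening,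
    hSt.trans (iUnion_mono fun n => self_subset_thickening (by exact_mod_cast hδ n) _), ?_⟩
  calc ∑' n, ediam (thickening (δ n) (t n)) ^ α ≤ ∑' n, (ediam (t n) ^ α + ε' n) :=
        ENNReal.tsum_le_tsum fun n => (hδt n).le
    _ = ∑' n, ediam (t n) ^ α + ∑' n, ε' n := ENNReal.tsum_add
    _ < ∑' n, ediam (t n) ^ α + ε := ENNReal.add_lt_add_left hsum_ne_top hε'sum
    _ < c := hεc

end HausdorffContent

lemma ENNReal.pos_iff_exists_inv_natCast_add_one_le {a : ℝ≥0∞} :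
    0 < a ↔ ∃ n : ℕ, ((n : ℝ≥0∞) + 1)⁻¹ ≤ a := by
  refine ⟨fun ha => ?_, fun ⟨n, hn⟩ => (ENNReal.inv_pos.2 (by simp)).trans_le hn⟩
  obtain ⟨n, hn⟩ := ENNReal.exists_inv_nat_lt ha.ne'
  exact ⟨n, (ENNReal.inv_le_inv.2 le_self_add).trans hn.le⟩

lemma isOpen_setOf_image_fiber_subset {X W Y : Type*} [TopologicalSpace X] [TopologicalSpace W]
    [T2Space W] [TopologicalSpace Y] {π : X → W} (hπ : Continuous π) {f : X → Y}
    (hf : Continuous f) {K : Set X} (hK : IsCompact K) {U : Set Y} (hU : IsOpen U) :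
    IsOpen {a | f '' (π ⁻¹' {a} ∩ K) ⊆ U} := by
  have hcompl : {a | f '' (π ⁻¹' {a} ∩ K) ⊆ U} = (π '' (K \ f ⁻¹' U))ᶜ := by
    ext a
    simp only [subset_def, mem_image, mem_inter_iff, mem_preimage, mem_singleton_iff,
      forall_exists_index, and_imp, mem_ofPred_eq, mem_compl_iff, Set.mem_sdiff, not_exists,
      not_and]
    grind
  rw [hcompl]
  exact ((hK.diff (hU.preimage hf)).image hπ).isClosed.isOpen_compl

section UpperSemicontinuousFamily

variable {W Y : Type*} [TopologicalSpace W] [EMetricSpace Y] {S : W → Set Y} {α : ℝ}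

lemma isOpen_setOf_hausdorffContent_lt (hS : ∀ U, IsOpen U → IsOpen {a | S a ⊆ U})
    (hα : 0 < α) (c : ℝ≥0∞) : IsOpen {a | hausdorffContent α (S a) < c} := by
  refine isOpen_iff_forall_mem_open.2 fun a ha => ?_
  obtain ⟨U, hU, haU, hsum⟩ := exists_isOpen_cover_tsum_lt_of_hausdorffContent_lt hα ha
  exact ⟨{a' | S a' ⊆ ⋃ n, U n}, fun a' ha' => (hausdorffContent_le_tsum U ha').trans_lt hsum,
    hS _ (isOpen_iUnion hU), haU⟩

lemma isClosed_setOf_le_hausdorffContent (hS : ∀ U, IsOpen U → IsOpen {a | S a ⊆ U})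
    (hα : 0 < α) (c : ℝ≥0∞) : IsClosed {a | c ≤ hausdorffContent α (S a)} := by
  simpa only [compl_ofPred, not_lt] using (isOpen_setOf_hausdorffContent_lt hS hα c).isClosed_compl

end UpperSemicontinuousFamily

theorem exceptional_set_sigma_compact_general
    {X W Y : Type*} [MetricSpace X] [MetricSpace W] [MetricSpace Y]
    [MeasurableSpace Y] [BorelSpace Y]
    (π : X → W) (hπ : Continuous π) (f : X → Y) (hf : Continuous f)
    (K : Set X) (hK : IsCompact K) (α : ℝ) (hα : 0 < α) :
    (∀ n : ℕ, IsClosed {a : W |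
        ((n : ℝ≥0∞) + 1)⁻¹ ≤ hausdorffContent α (f '' (π ⁻¹' {a} ∩ K))}) ∧
    {a : W | 0 < μH[α] (f '' (π ⁻¹' {a} ∩ K))} =
      ⋃ n : ℕ, {a : W |
        ((n : ℝ≥0∞) + 1)⁻¹ ≤ hausdorffContent α (f '' (π ⁻¹' {a} ∩ K))} ∧
    ∃ F : ℕ → Set W, (∀ n, IsCompact (F n)) ∧
      {a : W | 0 < μH[α] (f '' (π ⁻¹' {a} ∩ K))} = ⋃ n, F n := by
  set E : ℕ → Set W := fun n => {a : W |
    ((n : ℝ≥0∞) + 1)⁻¹ ≤ hausdorffContent α (f '' (π ⁻¹' {a} ∩ K))}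
  have hclosed (n : ℕ) : IsClosed (E n) :=
    isClosed_setOf_le_hausdorffContent (fun _ hU => isOpen_setOf_image_fiber_subset hπ hf hK hU)
      hα _
  have hunion : {a : W | 0 < μH[α] (f '' (π ⁻¹' {a} ∩ K))} = ⋃ n, E n := by
    ext a
    rw [mem_iUnion, mem_ofPred_eq, ← hausdorffContent_pos_iff hα,
      ENNReal.pos_iff_exists_inv_natCast_add_one_le]
    rfl
  have hE_subset (n : ℕ) : E n ⊆ π '' K := fun a ha => by
    obtain ⟨_, ⟨x, ⟨hxa, hxK⟩, -⟩⟩ :=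
      Set.Nonempty.of_hausdorffContent_pos hα ((ENNReal.inv_pos.2 (by simp)).trans_le ha)
    exact ⟨x, hxK, hxa⟩
  exact ⟨hclosed, hunion, E,
    fun n => (hK.image hπ).of_isClosed_subset (hclosed n) (hE_subset n), hunion⟩

/-- The set `E_α = {a ∈ W : ℋ^α(f(π⁻¹(a) ∩ K)) > 0}` is a countable union of compact sets:
each content-sublevel set `E_α(n)` is closed and `E_α = ⋃ₙ E_α(n)`. -/
theorem exceptional_set_sigma_compact
    {X W Y : Type*} [MetricSpace X] [MetricSpace W] [MetricSpace Y]
    [ProperSpace X] [ProperSpace W] [MeasurableSpace Y] [BorelSpace Y]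
    (π : X → W) (hπ : Continuous π) (f : X → Y) (hf : Continuous f)
    (K : Set X) (hK : IsCompact K) (α : ℝ) (hα : 0 < α) :
    (∀ n : ℕ, IsClosed {a : W |
        ((n : ℝ≥0∞) + 1)⁻¹ ≤ hausdorffContent α (f '' (π ⁻¹' {a} ∩ K))}) ∧
    {a : W | 0 < μH[α] (f '' (π ⁻¹' {a} ∩ K))} =
      ⋃ n : ℕ, {a : W |
        ((n : ℝ≥0∞) + 1)⁻¹ ≤ hausdorffContent α (f '' (π ⁻¹' {a} ∩ K))} ∧
    ∃ F : ℕ → Set W, (∀ n, IsCompact (F n)) ∧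
      {a : W | 0 < μH[α] (f '' (π ⁻¹' {a} ∩ K))} = ⋃ n, F n :=
  exceptional_set_sigma_compact_general π hπ f hf K hK α hα
end

section
/- Let Z be the set of N×N real matrices with all entries of absolute value at most 1, equipped with Lebesgue measure. Let Φ be a linear map from N×N matrices to ℝ^N and b ∈ ℝ^N a fixed vector. Assume Φ(Z) contains a cube of side length δ > 0 in ℝ^N. Then for every 0 < α' < N, ∫_Z |Φ(L) + b|^{-α'} dL ≤ C/δ^{α'}, where C depends only on N and α'. -/
/-!
Choose preimages in `Z` of one corner of the cube and of its `N` neighbouring vertices. Their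
differences define a linear map `T : ℝ^N → ℝ^{N×N}` with `Φ ∘ T = δ • id` and `‖T t‖ ≤ 2N` on the
unit cube `[0,1]^N`. Translating the integration variable by `T t` keeps `Z` inside a fixed ball,
so averaging over `t ∈ [0,1]^N` and swapping the integrals reduces the estimate to
`∫_{[0,1]^N} |y + δ t|^{-α'} dt ≤ C δ^{-α'}` uniformly in `y`. By homogeneity this is the case
`δ = 1`: there the integrand is at most `1` off the unit ball, and on it the integral is at most
`∫_{|u|<1} |u|^{-α'} du`, which is finite because `α' < N`.
-/

open MeasureTheory Metric Set
open scoped ENNReal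

theorem lintegral_ball_rpow_neg_enorm_lt_top {E : Type*} [NormedAddCommGroup E]
    [NormedSpace ℝ E] [FiniteDimensional ℝ E] [MeasurableSpace E] [BorelSpace E]
    (μ : Measure E) [μ.IsAddHaarMeasure] {s : ℝ} (hd : 1 ≤ Module.finrank ℝ E)
    (hs : s < Module.finrank ℝ E) :
    ∫⁻ x in ball (0 : E) 1, ‖x‖ₑ ^ (-s) ∂μ < ∞ := by
  have : Nontrivial E := Module.nontrivial_of_finrank_pos (R := ℝ) (by omega)
  have hint : IntegrableOn (fun x : E => ‖x‖ ^ (-s)) (ball 0 1) μ :=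
    integrableOn_ball_of_norm_le_rpow hd hs (C := 1)
      (.of_forall fun x => by simp [abs_of_nonneg (Real.rpow_nonneg (norm_nonneg x) _)])
      (continuous_norm.measurable.pow_const _).aestronglyMeasurable
  refine (lintegral_congr_ae ?_).trans_lt hint.lintegral_lt_top
  have hne : ∀ᵐ x ∂μ, x ≠ (0 : E) := by simp [ae_iff, measure_singleton]
  filter_upwards [ae_restrict_of_ae hne] with x hx
  rw [← ofReal_norm, ENNReal.ofReal_rpow_of_pos (norm_pos_iff.mpr hx)]

theorem setLIntegral_rpow_neg_enorm_add_le {E : Type*} [NormedAddCommGroup E]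
    [MeasurableSpace E] [BorelSpace E] (μ : Measure E) [μ.IsAddLeftInvariant]
    {s : ℝ} (hs : 0 ≤ s) (y : E) (S : Set E) :
    ∫⁻ x in S, ‖y + x‖ₑ ^ (-s) ∂μ ≤ ∫⁻ x in ball (0 : E) 1, ‖x‖ₑ ^ (-s) ∂μ + μ S := by
  set g : E → ℝ≥0∞ := (ball (0 : E) 1).indicator (‖·‖ₑ ^ (-s))
  have hg : ∀ x, ‖x‖ₑ ^ (-s) ≤ g x + 1 := by
    intro x
    by_cases hx : x ∈ ball (0 : E) 1
    · simp [g, hx]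
    · have hx1 : 1 ≤ ‖x‖ₑ := by
        simpa [← ofReal_norm] using
          ENNReal.ofReal_le_ofReal (not_lt.mp (mem_ball_zero_iff.not.mp hx))
      have hxs : 1 ≤ ‖x‖ₑ ^ s := by simpa using ENNReal.rpow_le_rpow hx1 hs
      simpa [g, hx, ENNReal.rpow_neg] using ENNReal.inv_le_one.mpr hxs
  calc ∫⁻ x in S, ‖y + x‖ₑ ^ (-s) ∂μ
      ≤ ∫⁻ x in S, (g (y + x) + 1) ∂μ := lintegral_mono fun x => hg (y + x)
    _ = ∫⁻ x in S, g (y + x) ∂μ + μ S := by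
        rw [lintegral_add_right _ measurable_const, setLIntegral_one]
    _ ≤ ∫⁻ x, g (y + x) ∂μ + μ S := by gcongr; exact Measure.restrict_le_self
    _ = ∫⁻ x in ball (0 : E) 1, ‖x‖ₑ ^ (-s) ∂μ + μ S := by
        rw [lintegral_add_left_eq_self, lintegral_indicator measurableSet_ball]

theorem enorm_add_smul_rpow_neg {E : Type*} [NormedAddCommGroup E] [NormedSpace ℝ E]
    {s δ : ℝ} (hδ : 0 < δ) (y x : E) :
    ‖y + δ • x‖ₑ ^ (-s) = ENNReal.ofReal δ ^ (-s) * ‖δ⁻¹ • y + x‖ₑ ^ (-s) := by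
  rw [← ENNReal.mul_rpow_of_ne_top ENNReal.ofReal_ne_top enorm_ne_top,
    ← Real.enorm_of_nonneg hδ.le, ← enorm_smul, smul_add, smul_inv_smul₀ hδ.ne']

theorem setLIntegral_unitCube_rpow_neg_enorm_add_smul_le {N : ℕ} {s δ : ℝ} (hs : 0 ≤ s)
    (hδ : 0 < δ) (y : EuclideanSpace ℝ (Fin N)) :
    ∫⁻ t in univ.pi fun _ => Icc (0 : ℝ) 1, ‖y + δ • WithLp.toLp 2 t‖ₑ ^ (-s) ≤
      ((∫⁻ x in ball (0 : EuclideanSpace ℝ (Fin N)) 1, ‖x‖ₑ ^ (-s)) + 1) *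
        ENNReal.ofReal δ ^ (-s) := by
  set cube : Set (Fin N → ℝ) := univ.pi fun _ => Icc 0 1
  have hcube : volume (WithLp.ofLp ⁻¹' cube : Set (EuclideanSpace ℝ (Fin N))) = 1 := by
    rw [(PiLp.volume_preserving_ofLp (Fin N)).measure_preimage
      (MeasurableSet.univ_pi fun _ => measurableSet_Icc).nullMeasurableSet]
    simp [Real.volume_Icc_pi]
  simp_rw [enorm_add_smul_rpow_neg hδ]
  rw [lintegral_const_mul' _ _
    (ENNReal.rpow_ne_top_of_ne_zero (by simpa using hδ) ENNReal.ofReal_ne_top), mul_comm]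
  gcongr
  calc ∫⁻ t in cube, ‖δ⁻¹ • y + WithLp.toLp 2 t‖ₑ ^ (-s)
      = ∫⁻ x in (WithLp.ofLp ⁻¹' cube : Set (EuclideanSpace ℝ (Fin N))),
          ‖δ⁻¹ • y + x‖ₑ ^ (-s) :=
        (PiLp.volume_preserving_toLp (Fin N)).setLIntegral_comp_preimage_emb
          (MeasurableEquiv.toLp 2 (Fin N → ℝ)).measurableEmbedding
          (fun x => ‖δ⁻¹ • y + x‖ₑ ^ (-s)) (WithLp.ofLp ⁻¹' cube)
    _ ≤ _ := by
        simpa [hcube] using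
          setLIntegral_rpow_neg_enorm_add_le volume hs (δ⁻¹ • y) (WithLp.ofLp ⁻¹' cube)

theorem setLIntegral_le_measure_mul_of_forall_lintegral_translate_le {V P : Type*}
    [AddGroup V] [MeasurableSpace V] [MeasurableAdd₂ V] [MeasurableSpace P]
    (μ : Measure V) [μ.IsAddRightInvariant] [SFinite μ]
    (ν : Measure P) [IsProbabilityMeasure ν]
    {f : V → ℝ≥0∞} (hf : Measurable f) {T : P → V} (hT : Measurable T) {S S' : Set V}
    (hSS' : ∀ᵐ t ∂ν, ∀ L, L + T t ∈ S → L ∈ S') {M : ℝ≥0∞}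
    (hM : ∀ L, ∫⁻ t, f (L + T t) ∂ν ≤ M) :
    ∫⁻ L in S, f L ∂μ ≤ μ S' * M := by
  have htranslate : ∀ v : V, (∀ L, L + v ∈ S → L ∈ S') →
      ∫⁻ L in S, f L ∂μ ≤ ∫⁻ L in S', f (L + v) ∂μ := fun v hv =>
    calc ∫⁻ L in S, f L ∂μ = ∫⁻ L in (· + v) ⁻¹' S, f (L + v) ∂μ :=
          ((measurePreserving_add_right μ v).setLIntegral_comp_preimage_emb
            (MeasurableEquiv.addRight v).measurableEmbedding f S).symm
      _ ≤ ∫⁻ L in S', f (L + v) ∂μ := lintegral_mono_set hv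
  calc ∫⁻ L in S, f L ∂μ = ∫⁻ _, ∫⁻ L in S, f L ∂μ ∂ν := by simp
    _ ≤ ∫⁻ t, ∫⁻ L in S', f (L + T t) ∂μ ∂ν :=
        lintegral_mono_ae (hSS'.mono fun t ht => htranslate (T t) ht)
    _ = ∫⁻ L in S', ∫⁻ t, f (L + T t) ∂ν ∂μ :=
        lintegral_lintegral_swap (by fun_prop)
    _ ≤ ∫⁻ _ in S', M ∂μ := lintegral_mono hM
    _ = μ S' * M := by rw [setLIntegral_const, mul_comm]

theorem exists_linearMap_comp_eq_smul_of_cube_subset_image {V : Type*}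
    [SeminormedAddCommGroup V] [NormedSpace ℝ V] {N : ℕ}
    (Φ : V →ₗ[ℝ] EuclideanSpace ℝ (Fin N)) {c : EuclideanSpace ℝ (Fin N)} {δ : ℝ} (hδ : 0 ≤ δ)
    (hc : WithLp.ofLp ⁻¹' (univ.pi fun i => Icc (c i) (c i + δ)) ⊆ Φ '' closedBall 0 1) :
    ∃ T : (Fin N → ℝ) →ₗ[ℝ] V, (∀ t, Φ (T t) = δ • WithLp.toLp 2 t) ∧
      ∀ t ∈ univ.pi fun _ => Icc (0 : ℝ) 1, ‖T t‖ ≤ 2 * N := by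
  obtain ⟨L₀, hL₀, hΦL₀⟩ := hc (a := c) fun i _ => ⟨le_rfl, by simpa using hδ⟩
  have hvertex : ∀ k, c + δ • EuclideanSpace.single k 1 ∈ Φ '' closedBall 0 1 := fun k =>
    hc fun i _ => by by_cases hik : i = k <;> simp [hik, hδ]
  choose L hL hΦL using hvertex
  refine ⟨Fintype.linearCombination ℝ fun k => L k - L₀, fun t => ?_, fun t ht => ?_⟩
  · ext i
    simp [Fintype.linearCombination_apply, hΦL, hΦL₀, Pi.single_apply, mul_comm]
  · have hdiff : ∀ k, ‖t k • (L k - L₀)‖ ≤ 2 := fun k => by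
      have htk : ‖t k‖ ≤ 1 := by
        obtain ⟨h0, h1⟩ := ht k (mem_univ k)
        rwa [Real.norm_of_nonneg h0]
      have hLk : ‖L k - L₀‖ ≤ 2 := (norm_sub_le _ _).trans <| by
        linarith [mem_closedBall_zero_iff.mp (hL k), mem_closedBall_zero_iff.mp hL₀]
      simpa [norm_smul] using mul_le_mul htk hLk (norm_nonneg _) zero_le_one
    calc ‖Fintype.linearCombination ℝ (fun k => L k - L₀) t‖
        ≤ ∑ k, ‖t k • (L k - L₀)‖ := by
          rw [Fintype.linearCombination_apply]; exact norm_sum_le _ _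
      _ ≤ ∑ _k : Fin N, (2 : ℝ) := Finset.sum_le_sum fun k _ => hdiff k
      _ = 2 * N := by simp [mul_comm]

theorem exists_lintegral_closedBall_rpow_neg_enorm_le {V : Type*} [NormedAddCommGroup V]
    [NormedSpace ℝ V] [FiniteDimensional ℝ V] [MeasurableSpace V] [BorelSpace V]
    (μ : Measure V) [μ.IsAddHaarMeasure] {N : ℕ} {s : ℝ} (hs : 0 ≤ s) (hsN : s < N) :
    ∃ C : ℝ≥0∞, C ≠ ∞ ∧ ∀ (Φ : V →ₗ[ℝ] EuclideanSpace ℝ (Fin N))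
      (b : EuclideanSpace ℝ (Fin N)) (δ : ℝ), 0 < δ →
      (∃ c : EuclideanSpace ℝ (Fin N),
        WithLp.ofLp ⁻¹' (univ.pi fun i => Icc (c i) (c i + δ)) ⊆ Φ '' closedBall 0 1) →
      ∫⁻ L in closedBall 0 1, ‖Φ L + b‖ₑ ^ (-s) ∂μ ≤ C * ENNReal.ofReal δ ^ (-s) := by
  set c₀ := ∫⁻ x in ball (0 : EuclideanSpace ℝ (Fin N)) 1, ‖x‖ₑ ^ (-s)
  have hc₀ : c₀ < ∞ := lintegral_ball_rpow_neg_enorm_lt_top volume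
    (by simpa [Nat.one_le_iff_ne_zero] using (hs.trans_lt hsN).ne') (by simpa using hsN)
  refine ⟨μ (closedBall 0 (1 + 2 * N)) * (c₀ + 1),
    ENNReal.mul_ne_top measure_closedBall_lt_top.ne (by simpa using hc₀.ne), ?_⟩
  rintro Φ b δ hδ ⟨c, hc⟩
  obtain ⟨T, hΦT, hT⟩ := exists_linearMap_comp_eq_smul_of_cube_subset_image Φ hδ.le hc
  set cube : Set (Fin N → ℝ) := univ.pi fun _ => Icc 0 1
  have hcube : MeasurableSet cube := MeasurableSet.univ_pi fun _ => measurableSet_Icc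
  have : IsProbabilityMeasure (volume.restrict cube) := ⟨by simp [cube, Real.volume_Icc_pi]⟩
  rw [mul_assoc]
  refine setLIntegral_le_measure_mul_of_forall_lintegral_translate_le μ
    (volume.restrict cube) (f := fun L => ‖Φ L + b‖ₑ ^ (-s))
    ((Φ.continuous_of_finiteDimensional.add continuous_const).enorm.measurable.pow_const _)
    T.continuous_of_finiteDimensional.measurable ?_ fun L => ?_
  · filter_upwards [ae_restrict_mem hcube] with t ht L hL
    rw [mem_closedBall_zero_iff] at hL ⊢
    calc ‖L‖ = ‖L + T t - T t‖ := by rw [add_sub_cancel_right]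
      _ ≤ ‖L + T t‖ + ‖T t‖ := norm_sub_le _ _
      _ ≤ 1 + 2 * N := add_le_add hL (hT t ht)
  · simp only [map_add, hΦT, add_right_comm (Φ L)]
    exact setLIntegral_unitCube_rpow_neg_enorm_add_smul_le hs hδ (Φ L + b)

theorem matrix_cube_integral_estimate_general (N : ℕ) (α' : ℝ)
    (hα'0 : 0 < α') (hα'N : α' < N) :
    ∃ C : ℝ, 0 < C ∧
      ∀ (Φ : (Fin N → Fin N → ℝ) →ₗ[ℝ] EuclideanSpace ℝ (Fin N))
        (b : EuclideanSpace ℝ (Fin N)) (δ : ℝ), 0 < δ →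
        (∃ c : EuclideanSpace ℝ (Fin N),
          WithLp.ofLp ⁻¹' (Set.univ.pi fun i => Set.Icc (c i) (c i + δ)) ⊆
            Φ '' {L : Fin N → Fin N → ℝ | ∀ i j, |L i j| ≤ 1}) →
        ∫⁻ L in {L : Fin N → Fin N → ℝ | ∀ i j, |L i j| ≤ 1},
            (‖Φ L + b‖₊ : ℝ≥0∞) ^ (-α') ∂volume ≤
          ENNReal.ofReal (C / δ ^ α') := by
  have hZ : {L : Fin N → Fin N → ℝ | ∀ i j, |L i j| ≤ 1} = closedBall 0 1 := by
    ext L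
    simp [pi_norm_le_iff_of_nonneg]
  obtain ⟨C, hC, hbound⟩ := exists_lintegral_closedBall_rpow_neg_enorm_le
    (volume : Measure (Fin N → Fin N → ℝ)) hα'0.le hα'N
  refine ⟨C.toReal + 1, by positivity, fun Φ b δ hδ hcube => ?_⟩
  rw [hZ] at hcube ⊢
  calc _ ≤ C * ENNReal.ofReal δ ^ (-α') := hbound Φ b δ hδ hcube
    _ ≤ ENNReal.ofReal ((C.toReal + 1) / δ ^ α') := by
      rw [ENNReal.ofReal_div_of_pos (by positivity), ← ENNReal.ofReal_rpow_of_pos hδ,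
        ENNReal.rpow_neg, div_eq_mul_inv, ENNReal.ofReal_add (by positivity) zero_le_one,
        ENNReal.ofReal_toReal hC]
      gcongr
      exact le_self_add

/-- Hunt–Kaloshin / Sauer–Yorke integral estimate: if `Φ` is a linear map from `N×N`
matrices to `ℝ^N`, `b ∈ ℝ^N`, and `Φ(Z)` contains an axis-parallel cube of side `δ`,
where `Z` is the cube of matrices with entries in `[−1,1]`, then for `0 < α' < N`,
`∫_Z |Φ(L)+b|^{-α'} dL ≤ C/δ^{α'}` with `C = C(N, α')`. -/
theorem matrix_cube_integral_estimate (N : ℕ) (hN : 0 < N) (α' : ℝ)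
    (hα'0 : 0 < α') (hα'N : α' < N) :
    ∃ C : ℝ, 0 < C ∧
      ∀ (Φ : (Fin N → Fin N → ℝ) →ₗ[ℝ] EuclideanSpace ℝ (Fin N))
        (b : EuclideanSpace ℝ (Fin N)) (δ : ℝ), 0 < δ →
        (∃ c : EuclideanSpace ℝ (Fin N),
          WithLp.ofLp ⁻¹' (Set.univ.pi fun i => Set.Icc (c i) (c i + δ)) ⊆
            Φ '' {L : Fin N → Fin N → ℝ | ∀ i j, |L i j| ≤ 1}) →
        ∫⁻ L in {L : Fin N → Fin N → ℝ | ∀ i j, |L i j| ≤ 1},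
            (‖Φ L + b‖₊ : ℝ≥0∞) ^ (-α') ∂volume ≤
          ENNReal.ofReal (C / δ ^ α') :=
  matrix_cube_integral_estimate_general N α' hα'0 hα'N
end

section
/- For any horizontal homogeneous subgroup 𝕍 = V × {0} of the n-th Heisenberg group ℍⁿ (with V an isotropic subspace of ℝ^{2n}), the projection π_𝕍 : ℍⁿ → 𝕍 defined by the semidirect splitting p = p_{𝕍^⊥} * p_𝕍 is a locally David–Semmes s-regular map with s = (2n+2) − dim V. That is: π_𝕍 is Lipschitz on compact sets (with respect to the Korányi metric), and for every compact K ⊆ ℍⁿ there are C ≥ 1 and r₀ > 0 such that for every ball B ⊆ 𝕍 of radius r < r₀, the set π_𝕍⁻¹(B) ∩ K can be covered by at most C·r^{−((2n+2) − dim V)} Korányi balls of radius C·r. -/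
open Metric
open scoped ENNReal NNReal

/-- The underlying space of the `n`-th Heisenberg group `ℍⁿ = ℝ^{2n} × ℝ`. -/
abbrev Heis (n : ℕ) := EuclideanSpace ℝ (Fin (2 * n)) × ℝ

/-- The standard symplectic form `ω(x,y) = ∑ᵢ (x_{n+i} yᵢ − xᵢ y_{n+i})` on `ℝ^{2n}`. -/
def symp (n : ℕ) (x y : EuclideanSpace ℝ (Fin (2 * n))) : ℝ :=
  ∑ i : Fin n,
    (x ⟨n + i.1, by have := i.isLt; omega⟩ * y ⟨i.1, by have := i.isLt; omega⟩ -
      x ⟨i.1, by have := i.isLt; omega⟩ * y ⟨n + i.1, by have := i.isLt; omega⟩)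

/-- The Heisenberg group law `(x,t)*(x',t') = (x+x', t+t'+2ω(x,x'))`. -/
def hmul {n : ℕ} (p q : Heis n) : Heis n :=
  (p.1 + q.1, p.2 + q.2 + 2 * symp n p.1 q.1)

/-- The Heisenberg group inverse. -/
def hinv {n : ℕ} (p : Heis n) : Heis n := (-p.1, -p.2)

/-- The Korányi norm `‖(x,t)‖ = (‖x‖⁴ + t²)^{1/4}`. -/
noncomputable def knorm {n : ℕ} (p : Heis n) : ℝ :=
  (‖p.1‖ ^ 4 + p.2 ^ 2) ^ ((1 : ℝ) / 4)

/-- The Korányi metric `d(p,q) = ‖p⁻¹ * q‖`. -/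
noncomputable def kdist {n : ℕ} (p q : Heis n) : ℝ := knorm (hmul (hinv p) q)

/-- The horizontal subgroup `𝕍 = V × {0}` determined by a subspace `V ⊆ ℝ^{2n}`. -/
def horizSub (n : ℕ) (V : Submodule ℝ (EuclideanSpace ℝ (Fin (2 * n)))) : Set (Heis n) :=
  {p : Heis n | p.1 ∈ V ∧ p.2 = 0}

/-- The projection `π_𝕍 : ℍⁿ → 𝕍` induced by the splitting `p = p_{𝕍^⊥} * p_𝕍`;
explicitly `π_𝕍(p) = (P_V p₁, 0)` with `P_V` the Euclidean orthogonal projection. -/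
noncomputable def projHoriz (n : ℕ) (V : Submodule ℝ (EuclideanSpace ℝ (Fin (2 * n))))
    [CompleteSpace V] (p : Heis n) : Heis n :=
  ((V.orthogonalProjection p.1 : EuclideanSpace ℝ (Fin (2 * n))), 0)

/-! On an isotropic `V` the Korányi distance between points of `𝕍` is Euclidean, so `π_𝕍` is
`1`-Lipschitz: `‖P_V x‖ ≤ ‖x‖` and the Korányi norm dominates the horizontal norm.

For the covering, write `m = dim V^⊥ = 2n − dim V`. A point `q` of a bounded set with
`π_𝕍 q ∈ B(a, r)` is pinned down up to `O(r)` horizontally by its `V^⊥`-component, which lies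
in a ball of `V^⊥` covered by a grid of mesh `r` with `O(r^{-m})` points; once the horizontal
centre `x` is fixed, the central coordinate of `(x,0)⁻¹ q` is bounded and a grid of mesh `r²`
with `O(r^{-2})` points fixes it up to `O(r²)`. As the Korányi norm is `(‖x‖⁴ + t²)^{1/4}`,
each resulting centre is at distance `O(r)`, giving `O(r^{-(m+2)})` balls. -/

open Module

section Koranyi

variable {n : ℕ}

lemma pow_four_rpow_one_div_four {a : ℝ} (ha : 0 ≤ a) : (a ^ 4) ^ ((1 : ℝ) / 4) = a := by
  rw [← Real.rpow_natCast, ← Real.rpow_mul ha]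
  norm_num

lemma knorm_mk_zero (x : EuclideanSpace ℝ (Fin (2 * n))) : knorm ((x, 0) : Heis n) = ‖x‖ := by
  simpa [knorm] using pow_four_rpow_one_div_four (norm_nonneg x)

lemma norm_fst_le_knorm (p : Heis n) : ‖p.1‖ ≤ knorm p := by
  calc ‖p.1‖ = (‖p.1‖ ^ 4) ^ ((1 : ℝ) / 4) := (pow_four_rpow_one_div_four (norm_nonneg _)).symm
    _ ≤ knorm p := by unfold knorm; gcongr; exact le_add_of_nonneg_right (sq_nonneg _)

lemma knorm_le_two_mul {p : Heis n} {ρ : ℝ} (hρ : 0 ≤ ρ) (h₁ : ‖p.1‖ ≤ ρ) (h₂ : |p.2| ≤ ρ ^ 2) :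
    knorm p ≤ 2 * ρ := by
  have h₁' := pow_le_pow_left₀ (norm_nonneg _) h₁ 4
  have h₂' := sq_le_sq' (abs_le.1 h₂).1 (abs_le.1 h₂).2
  have h : ‖p.1‖ ^ 4 + p.2 ^ 2 ≤ (2 * ρ) ^ 4 := by nlinarith [pow_nonneg hρ 4]
  calc knorm p ≤ ((2 * ρ) ^ 4) ^ ((1 : ℝ) / 4) := by unfold knorm; gcongr
    _ = 2 * ρ := pow_four_rpow_one_div_four (by positivity)

lemma symp_neg_left (x y : EuclideanSpace ℝ (Fin (2 * n))) : symp n (-x) y = -symp n x y := by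
  simp only [symp, PiLp.neg_apply, neg_mul, ← Finset.sum_neg_distrib]
  ring_nf

lemma abs_symp_le (x y : EuclideanSpace ℝ (Fin (2 * n))) :
    |symp n x y| ≤ 2 * n * (‖x‖ * ‖y‖) := by
  have hxy : ∀ i j, |x i * y j| ≤ ‖x‖ * ‖y‖ := fun i j => by
    rw [abs_mul]
    exact mul_le_mul (PiLp.norm_apply_le x i) (PiLp.norm_apply_le y j) (abs_nonneg _)
      (norm_nonneg _)
  calc |symp n x y| ≤ ∑ _i : Fin n, 2 * (‖x‖ * ‖y‖) := by
        refine (Finset.abs_sum_le_sum_abs _ _).trans (Finset.sum_le_sum fun i _ => ?_)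
        exact (abs_sub _ _).trans ((add_le_add (hxy _ _) (hxy _ _)).trans_eq (two_mul _).symm)
    _ = 2 * n * (‖x‖ * ‖y‖) := by
        rw [Finset.sum_const, Finset.card_univ, Fintype.card_fin, nsmul_eq_mul]; ring

lemma kdist_eq (p q : Heis n) :
    kdist p q = knorm ((q.1 - p.1, q.2 - p.2 - 2 * symp n p.1 q.1) : Heis n) := by
  simp only [kdist, hmul, hinv, symp_neg_left]
  congr 2
  · abel
  · ring

lemma norm_sub_fst_le_kdist (p q : Heis n) : ‖q.1 - p.1‖ ≤ kdist p q := by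
  simpa only [kdist_eq] using
    norm_fst_le_knorm ((q.1 - p.1, q.2 - p.2 - 2 * symp n p.1 q.1) : Heis n)

lemma kdist_mk_le {x : EuclideanSpace ℝ (Fin (2 * n))} {t ρ : ℝ} {q : Heis n} (hρ : 0 ≤ ρ)
    (h₁ : ‖q.1 - x‖ ≤ ρ) (h₂ : |q.2 - 2 * symp n x q.1 - t| ≤ ρ ^ 2) :
    kdist ((x, t) : Heis n) q ≤ 2 * ρ := by
  rw [kdist_eq]
  exact knorm_le_two_mul hρ h₁ (by rwa [sub_right_comm])

lemma kdist_mk_zero_of_isotropic {V : Submodule ℝ (EuclideanSpace ℝ (Fin (2 * n)))}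
    (hiso : ∀ x ∈ V, ∀ y ∈ V, symp n x y = 0) {x y : EuclideanSpace ℝ (Fin (2 * n))}
    (hx : x ∈ V) (hy : y ∈ V) : kdist ((x, 0) : Heis n) (y, 0) = ‖y - x‖ := by
  simp [kdist_eq, hiso x hx y hy, knorm_mk_zero]

end Koranyi

lemma projHoriz_apply {n : ℕ} (V : Submodule ℝ (EuclideanSpace ℝ (Fin (2 * n))))
    [CompleteSpace V] (p : Heis n) : projHoriz n V p = (V.starProjection p.1, 0) :=
  rfl

lemma kdist_projHoriz_le {n : ℕ} {V : Submodule ℝ (EuclideanSpace ℝ (Fin (2 * n)))}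
    (hiso : ∀ x ∈ V, ∀ y ∈ V, symp n x y = 0) (p q : Heis n) :
    kdist (projHoriz n V p) (projHoriz n V q) ≤ kdist p q := by
  calc kdist (projHoriz n V p) (projHoriz n V q)
        = ‖V.starProjection q.1 - V.starProjection p.1‖ := by
          rw [projHoriz_apply, projHoriz_apply]
          exact kdist_mk_zero_of_isotropic hiso (V.starProjection_apply_mem _)
            (V.starProjection_apply_mem _)
    _ = ‖V.starProjection (q.1 - p.1)‖ := by rw [map_sub]
    _ ≤ ‖q.1 - p.1‖ := V.norm_starProjection_apply_le _
    _ ≤ kdist p q := norm_sub_fst_le_kdist p q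

lemma Submodule.norm_sub_add_le {E : Type*} [NormedAddCommGroup E] [InnerProductSpace ℝ E]
    (K : Submodule ℝ E) [K.HasOrthogonalProjection] (v x y : E) :
    ‖v - (x + y)‖ ≤ ‖K.starProjection v - x‖ + ‖Kᗮ.starProjection v - y‖ := by
  calc ‖v - (x + y)‖ = ‖(K.starProjection v - x) + (Kᗮ.starProjection v - y)‖ := by
        rw [K.starProjection_orthogonal_val]; abel_nf
    _ ≤ _ := norm_add_le _ _

lemma exists_finset_net_Icc {R s : ℝ} (hR : 0 ≤ R) (hs : 0 < s) :
    ∃ G : Finset ℝ, (G.card : ℝ) ≤ 2 * R / s + 3 ∧ ∀ u, |u| ≤ R → ∃ g ∈ G, |u - g| ≤ s / 2 := by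
  set N := ⌈R / s⌉
  have hN : 0 ≤ N := Int.ceil_nonneg (by positivity)
  refine ⟨(Finset.Icc (-N) N).image fun k : ℤ => k * s, ?_, fun u hu => ?_⟩
  · have hcard : ((Finset.Icc (-N) N).card : ℤ) = 2 * N + 1 := by
      rw [Int.card_Icc]; omega
    calc (((Finset.Icc (-N) N).image fun k : ℤ => (k : ℝ) * s).card : ℝ)
        ≤ (Finset.Icc (-N) N).card := by exact_mod_cast Finset.card_image_le
      _ = 2 * N + 1 := by exact_mod_cast hcard
      _ ≤ 2 * R / s + 3 := by linarith [Int.ceil_lt_add_one (R / s), mul_div_assoc 2 R s]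
  · have hround : |u / s - round (u / s)| ≤ 1 / 2 := abs_sub_round _
    refine ⟨round (u / s) * s, Finset.mem_image_of_mem _ ?_, ?_⟩
    · have hus : |u / s| ≤ R / s := by rw [abs_div, abs_of_pos hs]; gcongr
      have hk : |(round (u / s) : ℝ)| < N + 1 := by
        have := abs_sub_abs_le_abs_sub (round (u / s) : ℝ) (u / s)
        rw [abs_sub_comm] at this
        linarith [Int.le_ceil (R / s)]
      rw [Finset.mem_Icc, ← abs_le]
      exact Int.lt_add_one_iff.1 (by exact_mod_cast hk)
    · calc |u - round (u / s) * s| = |u / s - round (u / s)| * s := by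
            rw [← abs_of_pos hs, ← abs_mul, abs_of_pos hs, sub_mul, div_mul_cancel₀ u hs.ne']
        _ ≤ s / 2 := by linarith [mul_le_mul_of_nonneg_right hround hs.le]

lemma exists_finset_net_closedBall {E : Type*} [NormedAddCommGroup E] [InnerProductSpace ℝ E]
    [FiniteDimensional ℝ E] {R s : ℝ} (hR : 0 ≤ R) (hs : 0 < s) :
    ∃ G : Finset E, (G.card : ℝ) ≤ (2 * R / s + 3) ^ finrank ℝ E ∧
      ∀ w : E, ‖w‖ ≤ R → ∃ g ∈ G, ‖w - g‖ ≤ finrank ℝ E * (s / 2) := by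
  classical
  obtain ⟨G₁, hG₁card, hG₁⟩ := exists_finset_net_Icc hR hs
  let b := stdOrthonormalBasis ℝ E
  refine ⟨(Fintype.piFinset fun _ => G₁).image fun c => ∑ i, c i • b i, ?_, fun w hw => ?_⟩
  · calc (((Fintype.piFinset fun _ => G₁).image fun c => ∑ i, c i • b i).card : ℝ)
        ≤ (Fintype.piFinset fun _ : Fin (finrank ℝ E) => G₁).card := by
          exact_mod_cast Finset.card_image_le
      _ = (G₁.card : ℝ) ^ finrank ℝ E := by simp
      _ ≤ (2 * R / s + 3) ^ finrank ℝ E := by gcongr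
  · have hcoord : ∀ i, |b.repr w i| ≤ R := fun i => by
      rw [b.repr_apply_apply]
      exact (abs_real_inner_le_norm _ _).trans (by simpa [b.orthonormal.1 i] using hw)
    choose c hcG hc using fun i => hG₁ _ (hcoord i)
    refine ⟨∑ i, c i • b i, Finset.mem_image_of_mem _ (Fintype.mem_piFinset.2 hcG), ?_⟩
    calc ‖w - ∑ i, c i • b i‖ = ‖∑ i, (b.repr w i - c i) • b i‖ := by
          simp only [sub_smul, Finset.sum_sub_distrib, b.sum_repr]
      _ ≤ ∑ i, ‖(b.repr w i - c i) • b i‖ := norm_sum_le _ _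
      _ ≤ ∑ _i : Fin (finrank ℝ E), s / 2 := by
          gcongr with i
          simpa [norm_smul, b.orthonormal.1 i] using hc i
      _ = finrank ℝ E * (s / 2) := by simp

lemma div_add_three_le {A ρ : ℝ} (hρ : 0 < ρ) (hρ₁ : ρ ≤ 1) : A / ρ + 3 ≤ (A + 3) / ρ := by
  rw [add_div]
  gcongr
  exact (le_div_iff₀ hρ).2 (by linarith)

lemma exists_finset_kdist_net_tube {n : ℕ} (V : Submodule ℝ (EuclideanSpace ℝ (Fin (2 * n))))
    [V.HasOrthogonalProjection] {R : ℝ} (hR : 0 ≤ R) :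
    ∃ C : ℝ, 0 ≤ C ∧ ∀ (x₀ : EuclideanSpace ℝ (Fin (2 * n))) (r : ℝ), 0 < r → r ≤ 1 →
      ∃ T : Finset (Heis n), (T.card : ℝ) ≤ C / r ^ (finrank ℝ Vᗮ + 2) ∧
        ∀ q : Heis n, ‖V.starProjection q.1 - x₀‖ ≤ r → ‖q‖ ≤ R →
          ∃ x ∈ T, kdist x q ≤ 2 * (finrank ℝ Vᗮ + 2) * r := by
  set m := finrank ℝ Vᗮ
  set M := R + 4 * n * (R + m + 2) * R
  have hM : 0 ≤ M := by positivity
  refine ⟨(2 * R + 3) ^ m * (2 * M + 3), by positivity, fun x₀ r hr hr₁ => ?_⟩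
  obtain ⟨G₁, hG₁card, hG₁⟩ := exists_finset_net_closedBall (E := Vᗮ) hR hr
  obtain ⟨G₂, hG₂card, hG₂⟩ := exists_finset_net_Icc hM (pow_pos hr 2)
  refine ⟨(G₁ ×ˢ G₂).image fun wt => ((x₀ + wt.1, wt.2) : Heis n), ?_, fun q hq hqR => ?_⟩
  · calc ((G₁ ×ˢ G₂).image fun wt => ((x₀ + wt.1, wt.2) : Heis n)).card
        ≤ (G₁.card : ℝ) * G₂.card := by
          exact_mod_cast (Finset.card_image_le).trans_eq (Finset.card_product G₁ G₂)
      _ ≤ ((2 * R + 3) / r) ^ m * ((2 * M + 3) / r ^ 2) := by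
          gcongr
          · exact hG₁card.trans (by gcongr; exact div_add_three_le hr hr₁)
          · exact hG₂card.trans (div_add_three_le (by positivity) (pow_le_one₀ hr.le hr₁))
      _ = (2 * R + 3) ^ m * (2 * M + 3) / r ^ (m + 2) := by
          rw [div_pow, div_mul_div_comm, pow_add]
  · have hq₁ : ‖q.1‖ ≤ R := (norm_fst_le q).trans hqR
    obtain ⟨w, hwG, hw⟩ := hG₁ (Vᗮ.orthogonalProjectionOnto q.1)
      ((Vᗮ.norm_orthogonalProjectionOnto_apply_le _).trans hq₁)
    set x := x₀ + (w : EuclideanSpace ℝ (Fin (2 * n)))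
    have hx : ‖q.1 - x‖ ≤ (m + 2) * r := by
      have hw' : ‖Vᗮ.starProjection q.1 - w‖ ≤ m * (r / 2) := hw
      nlinarith [V.norm_sub_add_le q.1 x₀ w]
    have hxR : ‖x‖ ≤ R + m + 2 := by
      calc ‖x‖ ≤ ‖q.1‖ + ‖q.1 - x‖ := norm_le_norm_add_norm_sub q.1 x
        _ ≤ R + (m + 2) * 1 := add_le_add hq₁ (hx.trans (by gcongr))
        _ = R + m + 2 := by ring
    have hcentre : |q.2 - 2 * symp n x q.1| ≤ M := by
      have h₂ : |q.2| ≤ R := (norm_snd_le q).trans hqR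
      have hω : |symp n x q.1| ≤ 2 * n * ((R + m + 2) * R) :=
        (abs_symp_le x q.1).trans (by gcongr)
      calc |q.2 - 2 * symp n x q.1| ≤ |q.2| + 2 * |symp n x q.1| := by
            simpa [abs_mul] using abs_sub q.2 (2 * symp n x q.1)
        _ ≤ M := by linarith
    obtain ⟨t, htG, ht⟩ := hG₂ _ hcentre
    refine ⟨(x, t), Finset.mem_image.2 ⟨(w, t), Finset.mem_product.2 ⟨hwG, htG⟩, rfl⟩, ?_⟩
    have ht' : |q.2 - 2 * symp n x q.1 - t| ≤ ((m + 2) * r) ^ 2 :=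
      ht.trans (by nlinarith [sq_nonneg r, sq_nonneg (m * r)])
    exact (kdist_mk_le (by positivity) hx ht').trans_eq (by ring)

lemma rpow_neg_codim {n : ℕ} (V : Submodule ℝ (EuclideanSpace ℝ (Fin (2 * n))))
    [V.HasOrthogonalProjection] {r : ℝ} (hr : 0 ≤ r) :
    r ^ (-((2 * (n : ℝ) + 2) - (finrank ℝ V : ℝ))) = (r ^ (finrank ℝ Vᗮ + 2))⁻¹ := by
  have hdim : (finrank ℝ V : ℝ) + finrank ℝ Vᗮ = 2 * n := by
    exact_mod_cast (V.finrank_add_finrank_orthogonal).trans (finrank_euclideanSpace_fin)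
  rw [← Real.rpow_natCast, ← Real.rpow_neg hr]
  push_cast
  congr 1
  linarith

theorem projHoriz_DSregular_general (n : ℕ)
    (V : Submodule ℝ (EuclideanSpace ℝ (Fin (2 * n))))
    (hiso : ∀ x ∈ V, ∀ y ∈ V, symp n x y = 0) :
    (∀ K : Set (Heis n), IsCompact K → ∃ L : ℝ, 0 ≤ L ∧
      ∀ p ∈ K, ∀ q ∈ K, kdist (projHoriz n V p) (projHoriz n V q) ≤ L * kdist p q) ∧
    ∀ K : Set (Heis n), IsCompact K → ∃ C : ℝ, 1 ≤ C ∧ ∃ r₀ : ℝ, 0 < r₀ ∧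
      ∀ a ∈ horizSub n V, ∀ r : ℝ, 0 < r → r < r₀ →
        ∃ T : Finset (Heis n),
          (T.card : ℝ) ≤ C * r ^ (-((2 * (n : ℝ) + 2) - (Module.finrank ℝ V : ℝ))) ∧
          projHoriz n V ⁻¹' {b | b ∈ horizSub n V ∧ kdist a b < r} ∩ K ⊆
            ⋃ x ∈ T, {q : Heis n | kdist x q < C * r} := by
  refine ⟨fun K _ => ⟨1, zero_le_one, fun p _ q _ => ?_⟩, fun K hK => ?_⟩
  · rw [one_mul]
    exact kdist_projHoriz_le hiso p q
  obtain ⟨R, hR, hKR⟩ := hK.isBounded.exists_pos_norm_le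
  obtain ⟨C₀, hC₀, hcover⟩ := exists_finset_kdist_net_tube V hR.le
  set m := finrank ℝ Vᗮ
  have hm : (0 : ℝ) ≤ m := m.cast_nonneg
  refine ⟨C₀ + 2 * (m + 2) + 1, by linarith, 1, one_pos, fun a _ r hr hr₁ => ?_⟩
  obtain ⟨T, hTcard, hT⟩ := hcover a.1 r hr hr₁.le
  refine ⟨T, ?_, ?_⟩
  · rw [rpow_neg_codim V hr.le, ← div_eq_mul_inv]
    exact hTcard.trans (by gcongr; linarith)
  · rintro q ⟨⟨-, hqa⟩, hqK⟩
    have hq : ‖V.starProjection q.1 - a.1‖ ≤ r := by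
      simpa only [projHoriz_apply] using (norm_sub_fst_le_kdist a _).trans hqa.le
    obtain ⟨x, hxT, hxq⟩ := hT q hq (hKR q hqK)
    exact Set.mem_biUnion hxT (hxq.trans_lt (by gcongr; linarith))

/-- The projection of `ℍⁿ` onto a horizontal homogeneous subgroup `𝕍 = V × {0}` (with `V`
isotropic) is locally David–Semmes `s`-regular with `s = (2n+2) − dim V`: it is Lipschitz
on compact sets for the Korányi metric, and preimages of balls of radius `r` in `𝕍`
intersected with a compact set can be covered by `≤ C r^{-s}` Korányi balls of radius `Cr`. -/
theorem projHoriz_DSregular (n : ℕ) (hn : 0 < n)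
    (V : Submodule ℝ (EuclideanSpace ℝ (Fin (2 * n))))
    (hiso : ∀ x ∈ V, ∀ y ∈ V, symp n x y = 0) :
    (∀ K : Set (Heis n), IsCompact K → ∃ L : ℝ, 0 ≤ L ∧
      ∀ p ∈ K, ∀ q ∈ K, kdist (projHoriz n V p) (projHoriz n V q) ≤ L * kdist p q) ∧
    ∀ K : Set (Heis n), IsCompact K → ∃ C : ℝ, 1 ≤ C ∧ ∃ r₀ : ℝ, 0 < r₀ ∧
      ∀ a ∈ horizSub n V, ∀ r : ℝ, 0 < r → r < r₀ →
        ∃ T : Finset (Heis n),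
          (T.card : ℝ) ≤ C * r ^ (-((2 * (n : ℝ) + 2) - (Module.finrank ℝ V : ℝ))) ∧
          projHoriz n V ⁻¹' {b | b ∈ horizSub n V ∧ kdist a b < r} ∩ K ⊆
            ⋃ x ∈ T, {q : Heis n | kdist x q < C * r} :=
  projHoriz_DSregular_general n V hiso
end
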